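/- If (τ*, ε*) is an optimal point of problem (P2) and ε_M* = 0 for some index 0 ≤ M ≤ K, then ε_i* = 0 for every index M ≤ i ≤ K. -/

import Mathlib

/-!
Suppose `ε_i > 0` for some `i > M`, with `i` minimal, so that slots `M` and `i` see the same
accumulated energy `S = Σ_{j<M} ε_j`. Move a little energy `δ` (and, if `τ_M = 0`, a little time
`θ = δ / P_P`) from slot `i` to slot `M`. This keeps the point feasible and lowers no other term
of the objective, since prefix sums only grow. The two affected terms strictly gain: if
`τ_M > 0`, slot `i` receives energy for free; if `τ_M = 0 = S`, slot `i` goes from rate `0` to a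
positive rate; and if `τ_M = 0 < S`, the new slot at `M` earns `θ log (1 + γ_M S / θ)`, which
beats the `O(θ)` lost at slot `i` for small `θ`.
-/

/-- The rate function `r(t,x) = t·log(1 + x/t)` for `t > 0`, and `r(0,x) = 0`. -/
noncomputable def rate (t x : ℝ) : ℝ := if 0 < t then t * Real.log (1 + x / t) else 0

/-- The feasible set of problem (P2): `τ_i ≥ 0`, `0 ≤ ε_i ≤ τ_i·P_P` for `0 ≤ i ≤ K`,
`Σ ε_i ≤ P_A` and `Σ τ_i ≤ 1`. -/
def FeasibleP2 (K : ℕ) (PA PP : ℝ) (τ ε : ℕ → ℝ) : Prop :=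
  (∀ i ≤ K, 0 ≤ τ i) ∧ (∀ i ≤ K, 0 ≤ ε i ∧ ε i ≤ τ i * PP) ∧
  (∑ i ∈ Finset.range (K + 1), ε i ≤ PA) ∧ (∑ i ∈ Finset.range (K + 1), τ i ≤ 1)

/-- The objective of problem (P2): `R(τ,ε) = Σ_{i=1}^K r(τ_i, γ_i·Σ_{j=0}^{i−1} ε_j)`. -/
noncomputable def ObjP2 (K : ℕ) (γ τ ε : ℕ → ℝ) : ℝ :=
  ∑ i ∈ Finset.Icc 1 K, rate (τ i) (γ i * ∑ j ∈ Finset.range i, ε j)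

open Finset Filter Topology Real

section Rate

lemma rate_of_pos {t : ℝ} (ht : 0 < t) (x : ℝ) : rate t x = t * log (1 + x / t) := if_pos ht

lemma rate_of_nonpos {t : ℝ} (ht : t ≤ 0) (x : ℝ) : rate t x = 0 := if_neg ht.not_gt

lemma rate_zero_right (t : ℝ) : rate t 0 = 0 := by
  simp [rate]

lemma rate_nonneg (t : ℝ) {x : ℝ} (hx : 0 ≤ x) : 0 ≤ rate t x := by
  rcases le_or_gt t 0 with ht | ht
  · rw [rate_of_nonpos ht]
  · rw [rate_of_pos ht]
    have : 0 ≤ x / t := by positivity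
    exact mul_nonneg ht.le (log_nonneg (by linarith))

lemma rate_le_rate (t : ℝ) {x y : ℝ} (hx : 0 ≤ x) (hxy : x ≤ y) : rate t x ≤ rate t y := by
  rcases le_or_gt t 0 with ht | ht
  · rw [rate_of_nonpos ht, rate_of_nonpos ht]
  · rw [rate_of_pos ht, rate_of_pos ht]
    have : 0 ≤ x / t := by positivity
    gcongr

lemma rate_lt_rate {t x y : ℝ} (ht : 0 < t) (hx : 0 ≤ x) (hxy : x < y) : rate t x < rate t y := by
  rw [rate_of_pos ht, rate_of_pos ht]
  have : 0 ≤ x / t := by positivity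
  gcongr

lemma rate_pos {t x : ℝ} (ht : 0 < t) (hx : 0 < x) : 0 < rate t x :=
  rate_zero_right t ▸ rate_lt_rate ht le_rfl hx

lemma rate_le_mul_log {t t' x : ℝ} (ht' : 0 < t') (htt' : t' ≤ t) (hx : 0 ≤ x) :
    rate t x ≤ t * log (1 + x / t') := by
  have ht : 0 < t := ht'.trans_le htt'
  rw [rate_of_pos ht]
  have : 0 ≤ x / t := by positivity
  gcongr

/-- `θ ↦ θ log (1 + a/θ)` has infinite slope at `0`, while shortening a slot of length `τ` by
`θ` costs only `θ log (1 + b/(τ - θ))`. -/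
lemma eventually_rate_lt_rate_add_rate {τ a b : ℝ} (hτ : 0 < τ) (ha : 0 < a) (hb : 0 ≤ b) :
    ∀ᶠ θ in 𝓝[>] 0, rate τ b < rate θ a + rate (τ - θ) b := by
  have hlin : ∀ᶠ θ in 𝓝 (0 : ℝ), b * θ < a * (τ - θ) :=
    ContinuousAt.eventually_lt (by fun_prop) (by fun_prop) (by simpa using mul_pos ha hτ)
  filter_upwards [nhdsWithin_le_nhds hlin, Ioo_mem_nhdsGT hτ] with θ hlin ⟨hθ, hθτ⟩
  have hτθ : 0 < τ - θ := sub_pos.mpr hθτ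
  have hratio : b / (τ - θ) < a / θ := by
    rw [div_lt_div_iff₀ hτθ hθ]; linarith
  calc rate τ b ≤ τ * log (1 + b / (τ - θ)) := rate_le_mul_log hτθ (by linarith) hb
    _ = rate (τ - θ) b + θ * log (1 + b / (τ - θ)) := by rw [rate_of_pos hτθ]; ring
    _ < rate (τ - θ) b + rate θ a := by
      rw [rate_of_pos hθ]
      have : 0 ≤ b / (τ - θ) := by positivity
      gcongr
    _ = rate θ a + rate (τ - θ) b := add_comm _ _

end Rate

lemma Finset.sum_lt_sum_of_pair {ι N : Type*} [DecidableEq ι] [AddCommMonoid N] [PartialOrder N]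
    [IsOrderedCancelAddMonoid N] {s : Finset ι} {f g : ι → N} {a b : ι} (ha : a ∈ s) (hb : b ∈ s)
    (hab : a ≠ b) (hle : ∀ k ∈ s, k ≠ a → k ≠ b → f k ≤ g k) (hlt : f a + f b < g a + g b) :
    ∑ k ∈ s, f k < ∑ k ∈ s, g k := by
  have hb' : b ∈ s.erase a := mem_erase.mpr ⟨hab.symm, hb⟩
  rw [← add_sum_erase s f ha, ← add_sum_erase s g ha, ← add_sum_erase _ f hb',
    ← add_sum_erase _ g hb', ← add_assoc, ← add_assoc]
  refine add_lt_add_of_lt_of_le hlt (sum_le_sum fun k hk => ?_)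
  obtain ⟨hkb, hk⟩ := mem_erase.mp hk
  obtain ⟨hka, hk⟩ := mem_erase.mp hk
  exact hle k hk hka hkb

section Transfer

variable (M i : ℕ) (a : ℝ) (f : ℕ → ℝ)

def transfer : ℕ → ℝ := f + Pi.single M a - Pi.single i a

variable {M i}

lemma transfer_apply_left (h : M ≠ i) : transfer M i a f M = f M + a := by
  simp [transfer, h]

lemma transfer_apply_right (h : M ≠ i) : transfer M i a f i = f i - a := by
  simp [transfer, h.symm]

lemma transfer_apply_of_ne {k : ℕ} (hM : k ≠ M) (hi : k ≠ i) : transfer M i a f k = f k := by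
  simp [transfer, hM, hi]

lemma sum_range_transfer (n : ℕ) :
    ∑ j ∈ range n, transfer M i a f j
      = ∑ j ∈ range n, f j + (if M < n then a else 0) - (if i < n then a else 0) := by
  simp [transfer, sum_add_distrib, sum_sub_distrib, sum_pi_single']

lemma sum_range_transfer_of_le {n : ℕ} (hn : n ≤ M) (hMi : M ≤ i) :
    ∑ j ∈ range n, transfer M i a f j = ∑ j ∈ range n, f j := by
  rw [sum_range_transfer, if_neg (by omega), if_neg (by omega)]; ring

lemma sum_range_transfer_self (hMi : M < i) :
    ∑ j ∈ range i, transfer M i a f j = ∑ j ∈ range i, f j + a := by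
  rw [sum_range_transfer, if_pos hMi, if_neg (lt_irrefl i)]; ring

lemma sum_range_le_sum_range_transfer (hMi : M ≤ i) (ha : 0 ≤ a) (n : ℕ) :
    ∑ j ∈ range n, f j ≤ ∑ j ∈ range n, transfer M i a f j := by
  rw [sum_range_transfer]
  split_ifs <;> first | omega | linarith

end Transfer

section P2

variable {K M i : ℕ} {γ : ℕ → ℝ} {PA PP θ δ : ℝ} {τ ε : ℕ → ℝ}

lemma objP2_eq_sum_range (K : ℕ) (γ τ ε : ℕ → ℝ) :
    ObjP2 K γ τ ε = ∑ k ∈ range (K + 1), rate (τ k) (γ k * ∑ j ∈ range k, ε j) := by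
  have hrange : range (K + 1) = insert 0 (Icc 1 K) := by
    ext k; simp only [mem_range, mem_insert, mem_Icc]; omega
  rw [hrange, sum_insert (by simp), ObjP2]
  simp [rate_zero_right]

lemma FeasibleP2.transfer (h : FeasibleP2 K PA PP τ ε) (hMK : M ≤ K) (hiK : i ≤ K) (hMi : M ≠ i)
    (hθ : 0 ≤ θ) (hθi : θ ≤ τ i) (hδ : 0 ≤ δ) (hδi : δ ≤ ε i) (hθδ : θ * PP ≤ δ)
    (hcap : ε M + δ ≤ (τ M + θ) * PP) :
    FeasibleP2 K PA PP (transfer M i θ τ) (transfer M i δ ε) := by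
  obtain ⟨hτ, hε, hsε, hsτ⟩ := h
  refine ⟨fun k hk => ?_, fun k hk => ?_, ?_, ?_⟩
  · rcases eq_or_ne k M with rfl | hkM
    · rw [transfer_apply_left _ _ hMi]; linarith [hτ k hk]
    rcases eq_or_ne k i with rfl | hki
    · rw [transfer_apply_right _ _ hMi]; linarith
    rw [transfer_apply_of_ne _ _ hkM hki]; exact hτ k hk
  · rcases eq_or_ne k M with rfl | hkM
    · rw [transfer_apply_left _ _ hMi, transfer_apply_left _ _ hMi]
      exact ⟨by linarith [(hε k hk).1], hcap⟩
    rcases eq_or_ne k i with rfl | hki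
    · rw [transfer_apply_right _ _ hMi, transfer_apply_right _ _ hMi]
      constructor <;> nlinarith [(hε k hk).2]
    rw [transfer_apply_of_ne _ _ hkM hki, transfer_apply_of_ne _ _ hkM hki]; exact hε k hk
  · rw [sum_range_transfer, if_pos (by omega), if_pos (by omega)]; linarith
  · rw [sum_range_transfer, if_pos (by omega), if_pos (by omega)]; linarith

lemma objP2_lt_objP2_transfer (hγ : ∀ k, 1 ≤ k → k ≤ K → 0 ≤ γ k) (hε : ∀ j ≤ K, 0 ≤ ε j)
    (hMi : M < i) (hiK : i ≤ K) (hδ : 0 ≤ δ)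
    (hgain : rate (τ M) (γ M * ∑ j ∈ range M, ε j) + rate (τ i) (γ i * ∑ j ∈ range i, ε j)
      < rate (τ M + θ) (γ M * ∑ j ∈ range M, ε j)
        + rate (τ i - θ) (γ i * (∑ j ∈ range i, ε j + δ))) :
    ObjP2 K γ τ ε < ObjP2 K γ (transfer M i θ τ) (transfer M i δ ε) := by
  rw [objP2_eq_sum_range, objP2_eq_sum_range]
  refine sum_lt_sum_of_pair (mem_range.mpr (by omega)) (mem_range.mpr (by omega)) hMi.ne
    (fun k hk hkM hki => ?_) ?_
  · rw [transfer_apply_of_ne _ _ hkM hki]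
    rcases Nat.eq_zero_or_pos k with rfl | hk0
    · simp
    have hγk := hγ k hk0 (by have := mem_range.mp hk; omega)
    have hS : 0 ≤ ∑ j ∈ range k, ε j :=
      sum_nonneg fun j hj => hε j (by have := mem_range.mp hj; have := mem_range.mp hk; omega)
    exact rate_le_rate _ (by positivity)
      (mul_le_mul_of_nonneg_left (sum_range_le_sum_range_transfer _ _ hMi.le hδ k) hγk)
  · rwa [transfer_apply_left _ _ hMi.ne, transfer_apply_right _ _ hMi.ne,
      sum_range_transfer_of_le _ _ le_rfl hMi.le, sum_range_transfer_self _ _ hMi]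

lemma exists_transfer_gain {p q e PP a b h : ℝ} (hp : 0 ≤ p) (hq : 0 ≤ q) (he : 0 < e)
    (heq : e ≤ q * PP) (ha : 0 ≤ a) (hb : 0 ≤ b) (hab : 0 < a ∨ b = 0) (hh : 0 < h) :
    ∃ θ δ, 0 ≤ θ ∧ θ ≤ q ∧ 0 ≤ δ ∧ δ ≤ e ∧ θ * PP ≤ δ ∧ δ ≤ (p + θ) * PP ∧
      rate p a + rate q b < rate (p + θ) a + rate (q - θ) (b + h * δ) := by
  have hqPP : 0 < q * PP := he.trans_le heq
  have hq : 0 < q := hq.lt_of_ne (by rintro rfl; simp at hqPP)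
  have hPP : 0 < PP := pos_of_mul_pos_right hqPP hq.le
  rcases hp.lt_or_eq with hp | rfl
  · have hδ : 0 ≤ min e (p * PP) := le_min he.le (by positivity)
    refine ⟨0, min e (p * PP), le_rfl, hq.le, hδ, min_le_left _ _, by rwa [zero_mul],
      by simp, ?_⟩
    simp only [add_zero, sub_zero, add_lt_add_iff_left]
    exact rate_lt_rate hq hb (lt_add_of_pos_right b (by positivity))
  have hθ_small : ∀ᶠ θ in 𝓝[>] (0 : ℝ), θ ∈ Set.Ioo 0 q ∧ θ ∈ Set.Ioo 0 (e / PP) :=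
    inter_mem (Ioo_mem_nhdsGT hq) (Ioo_mem_nhdsGT (div_pos he hPP))
  have hgain : ∀ᶠ θ in 𝓝[>] 0, rate q b < rate θ a + rate (q - θ) (b + h * (θ * PP)) := by
    rcases hab with ha | rfl
    · filter_upwards [hθ_small, eventually_rate_lt_rate_add_rate hq ha hb]
        with θ ⟨⟨hθ, _⟩, _⟩ hlt
      refine hlt.trans_le (add_le_add_right (rate_le_rate _ hb ?_) _)
      exact le_add_of_nonneg_right (by positivity)
    · filter_upwards [hθ_small] with θ ⟨⟨hθ, hθq⟩, _⟩
      rw [rate_zero_right]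
      exact add_pos_of_nonneg_of_pos (rate_nonneg _ ha) (rate_pos (by linarith) (by positivity))
  obtain ⟨θ, hθgain, ⟨hθ, hθq⟩, -, hθe⟩ := (hgain.and hθ_small).exists
  refine ⟨θ, θ * PP, hθ.le, hθq.le, by positivity, ((lt_div_iff₀ hPP).mp hθe).le, le_rfl,
    by simp, ?_⟩
  rwa [rate_of_nonpos le_rfl, zero_add, zero_add]

lemma eq_zero_of_optimal_of_sum_range_eq (hγ : ∀ k, 1 ≤ k → k ≤ K → 0 < γ k)
    (hfeas : FeasibleP2 K PA PP τ ε)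
    (hopt : ∀ τ' ε' : ℕ → ℝ, FeasibleP2 K PA PP τ' ε' → ObjP2 K γ τ' ε' ≤ ObjP2 K γ τ ε)
    (hMi : M < i) (hiK : i ≤ K) (hεM : ε M = 0)
    (hS : ∑ j ∈ range i, ε j = ∑ j ∈ range M, ε j) : ε i = 0 := by
  have ⟨hτ, hε, _, _⟩ := hfeas
  by_contra hne
  set S := ∑ j ∈ range M, ε j
  have hS0 : 0 ≤ S := sum_nonneg fun j hj => (hε j (by have := mem_range.mp hj; omega)).1
  obtain ⟨ha, hab⟩ : 0 ≤ γ M * S ∧ (0 < γ M * S ∨ γ i * S = 0) := by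
    rcases hS0.eq_or_lt with h | h
    · simp [← h]
    · have hM : 1 ≤ M := Nat.one_le_iff_ne_zero.mpr (by rintro rfl; simp [S] at h)
      have := mul_pos (hγ M hM (by omega)) h
      exact ⟨this.le, Or.inl this⟩
  obtain ⟨θ, δ, hθ, hθi, hδ, hδi, hθδ, hcap, hgain⟩ :=
    exists_transfer_gain (hτ M (by omega)) (hτ i hiK) ((hε i hiK).1.lt_of_ne' hne) (hε i hiK).2
      ha (mul_nonneg (hγ i (by omega) hiK).le hS0) hab (hγ i (by omega) hiK)
  have hfeas' := hfeas.transfer (by omega) hiK hMi.ne hθ hθi hδ hδi hθδ (by rwa [hεM, zero_add])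
  refine (hopt _ _ hfeas').not_gt (objP2_lt_objP2_transfer (fun k hk hkK => (hγ k hk hkK).le)
    (fun j hj => (hε j hj).1) hMi hiK hδ ?_)
  rwa [hS, mul_add]

end P2

theorem stmt4_general (K : ℕ) (γ : ℕ → ℝ)
    (hγ : ∀ i, 1 ≤ i → i ≤ K → 0 < γ i)
    (PA PP : ℝ)
    (τ ε : ℕ → ℝ) (hfeas : FeasibleP2 K PA PP τ ε)
    (hopt : ∀ τ' ε' : ℕ → ℝ, FeasibleP2 K PA PP τ' ε' →
      ObjP2 K γ τ' ε' ≤ ObjP2 K γ τ ε)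
    (M : ℕ) (hεM : ε M = 0) :
    ∀ i, M ≤ i → i ≤ K → ε i = 0 := by
  intro i hMi hiK
  induction i using Nat.strong_induction_on with
  | _ i ih =>
    rcases hMi.eq_or_lt with rfl | hMi
    · exact hεM
    refine eq_zero_of_optimal_of_sum_range_eq hγ hfeas hopt hMi hiK hεM ?_
    rw [← sum_range_add_sum_Ico _ hMi.le, add_eq_left]
    refine sum_eq_zero fun j hj => ?_
    obtain ⟨hMj, hji⟩ := mem_Ico.mp hj
    exact ih j hji hMj (by omega)

/-- If `(τ*, ε*)` is optimal for (P2) and `ε_M* = 0` for some `0 ≤ M ≤ K`, then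
`ε_i* = 0` for every `M ≤ i ≤ K`. -/
theorem stmt4 (K : ℕ) (hK : 1 ≤ K) (γ : ℕ → ℝ)
    (hγ : ∀ i, 1 ≤ i → i ≤ K → 0 < γ i)
    (PA PP : ℝ) (hPA : 0 < PA) (hPP : PA < PP)
    (τ ε : ℕ → ℝ) (hfeas : FeasibleP2 K PA PP τ ε)
    (hopt : ∀ τ' ε' : ℕ → ℝ, FeasibleP2 K PA PP τ' ε' →
      ObjP2 K γ τ' ε' ≤ ObjP2 K γ τ ε)
    (M : ℕ) (hM : M ≤ K) (hεM : ε M = 0) :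
    ∀ i, M ≤ i → i ≤ K → ε i = 0 :=
  stmt4_general K γ hγ PA PP τ ε hfeas hopt M hεM
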